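/- (Ball-plus-point construction for the 1/3 breakdown upper bound) Let d ≥ 2, let U be the uniform probability measure on the closed unit ball of ℝ^d, let μ ∈ ℝ^d with ‖μ‖ > 1, and let p = (2/3)U + (1/3)δ_μ. Then D(μ, p) = 1/3 and D(x, p) ≤ 1/3 for every x ∈ ℝ^d; i.e., μ is a Tukey median of p. (Letting ‖μ‖ → ∞ shows that adding 1/3 of the mass at a far point drives the Tukey median to infinity.) -/

import Mathlib

open MeasureTheory
open scoped RealInnerProductSpace ENNReal

noncomputable section

abbrev Euc (d : ℕ) := EuclideanSpace ℝ (Fin d)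

/-- Tukey depth of a point `μ` w.r.t. a measure `p`: the infimum over nonzero
directions `v` of the mass of the halfspace `{x | ⟪v, x - μ⟫ ≥ 0}`. -/
def tukeyDepth {d : ℕ} (μ : Euc d) (p : Measure (Euc d)) : ℝ :=
  ⨅ v : {v : Euc d // v ≠ 0}, (p {x | 0 ≤ ⟪(v : Euc d), x - μ⟫}).toReal

/-- `x` is a Tukey median of `p` if it maximizes the Tukey depth. -/
def IsTukeyMedian {d : ℕ} (x : Euc d) (p : Measure (Euc d)) : Prop :=
  ∀ y : Euc d, tukeyDepth y p ≤ tukeyDepth x p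

/-- Total variation distance: supremum over Borel sets `A` of `p A - q A`. -/
def tvDist {d : ℕ} (p q : Measure (Euc d)) : ℝ :=
  ⨆ A : {A : Set (Euc d) // MeasurableSet A}, ((p A).toReal - (q A).toReal)

/-- The halfspace metric `TV~(p, q)`. -/
def halfspaceDist {d : ℕ} (p q : Measure (Euc d)) : ℝ :=
  ⨆ vt : Euc d × ℝ,
    |(p {x | vt.2 ≤ ⟪vt.1, x⟫}).toReal - (q {x | vt.2 ≤ ⟪vt.1, x⟫}).toReal|

/-- Halfspace symmetry around `μ`: every one-dimensional projection of `X - μ`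
is symmetric in distribution. -/
def IsHalfspaceSymmetric {d : ℕ} (p : Measure (Euc d)) (μ : Euc d) : Prop :=
  ∀ v : Euc d,
    p.map (fun x => ⟪v, x - μ⟫) = p.map (fun x => -⟪v, x - μ⟫)

/-- Decay function `h(t)` of a measure `p` centered at `μ`. -/
def decay {d : ℕ} (p : Measure (Euc d)) (μ : Euc d) (t : ℝ) : ℝ :=
  ⨆ v : {v : Euc d // ‖v‖ ≤ 1}, (p {x | t < ⟪(v : Euc d), x - μ⟫}).toReal

/-!
A halfspace whose boundary passes through `μ` contains the atom, so `D(μ, p) ≥ 1/3`; the halfspace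
`{⟪μ, y - μ⟫ ≥ 0}` misses the ball because `‖μ‖ > 1`, so `D(μ, p) = 1/3`. For `x ≠ μ`, since
`d ≥ 2` there is `w ≠ 0` orthogonal to `x - μ`, with `⟪w, x⟫ ≥ 0` after a sign flip. Tilting `w`
slightly towards `x - μ` gives halfspaces at `x` that exclude the atom and, within the ball, lie in
`{⟪w, y⟫ ≥ -ε}`, whose uniform mass tends to `1/2`. Hence `D(x, p) ≤ (2/3)(1/2) = 1/3`.
-/

open ProbabilityTheory Filter Topology Metric

section InnerProductSpace

variable {E : Type*} [NormedAddCommGroup E] [InnerProductSpace ℝ E]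

theorem exists_ne_zero_inner_eq_zero_inner_nonneg [FiniteDimensional ℝ E]
    (hE : 2 ≤ Module.finrank ℝ E) (u x : E) : ∃ w ≠ 0, ⟪w, u⟫ = 0 ∧ 0 ≤ ⟪w, x⟫ := by
  have hker : LinearMap.ker (innerₛₗ ℝ u) ≠ ⊥ :=
    LinearMap.ker_ne_bot_of_finrank_lt (by rw [Module.finrank_self]; omega)
  obtain ⟨w, hwu, hw⟩ := Submodule.exists_mem_ne_zero_of_ne_bot hker
  rw [LinearMap.mem_ker, innerₛₗ_apply_apply, real_inner_comm] at hwu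
  rcases le_total 0 ⟪w, x⟫ with hwx | hwx
  · exact ⟨w, hw, hwu, hwx⟩
  · exact ⟨-w, neg_ne_zero.2 hw, by rw [inner_neg_left, hwu, neg_zero], by
      rw [inner_neg_left]; linarith⟩

theorem closedBall_inter_setOf_inner_sub_nonneg_subset {w u x : E} (hwx : 0 ≤ ⟪w, x⟫)
    {t : ℝ} (ht : 0 ≤ t) :
    closedBall 0 1 ∩ {y | 0 ≤ ⟪w + t • u, y - x⟫} ⊆
      {y | -(t * (‖u‖ * (1 + ‖x‖))) ≤ ⟪w, y⟫} := by
  rintro y ⟨hy, hyH⟩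
  rw [mem_closedBall_zero_iff] at hy
  have hexpand : ⟪w + t • u, y - x⟫ = ⟪w, y⟫ - ⟪w, x⟫ + t * ⟪u, y - x⟫ := by
    rw [inner_add_left, real_inner_smul_left, inner_sub_right]
  have hu : ⟪u, y - x⟫ ≤ ‖u‖ * (1 + ‖x‖) := calc
    ⟪u, y - x⟫ ≤ ‖u‖ * ‖y - x‖ := real_inner_le_norm u _
    _ ≤ ‖u‖ * (1 + ‖x‖) := by gcongr; exact (norm_sub_le y x).trans (by linarith)
  simp only [Set.mem_ofPred_eq, hexpand] at hyH ⊢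
  nlinarith [mul_le_mul_of_nonneg_left hu ht]

variable [FiniteDimensional ℝ E] [MeasurableSpace E] [BorelSpace E]
  (ν : Measure E) [ν.IsAddHaarMeasure] {s : Set E}

theorem measure_inter_setOf_inner_nonneg (hs : MeasurableSet s) (hsymm : -s = s) {w : E}
    (hw : w ≠ 0) : ν (s ∩ {y | 0 ≤ ⟪w, y⟫}) = ν s / 2 := by
  set S := s ∩ {y | 0 ≤ ⟪w, y⟫}
  set S' := s ∩ {y | ⟪w, y⟫ ≤ 0}
  have hS' : MeasurableSet S' := hs.inter (measurableSet_le (by fun_prop) measurable_const)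
  have hneg : -S = S' := by
    ext y
    rw [Set.mem_neg, Set.mem_inter_iff, ← Set.mem_neg, hsymm]
    simp [S', inner_neg_right]
  have hunion : S ∪ S' = s := by
    rw [← Set.inter_union_distrib_left, ← Set.ofPred_or, Set.inter_eq_left]
    exact fun y _ => le_total 0 ⟪w, y⟫
  have hker : LinearMap.ker (innerₛₗ ℝ w) ≠ ⊤ := fun h => by
    have hw' := (LinearMap.mem_ker (f := innerₛₗ ℝ w)).1 (h ▸ Submodule.mem_top (x := w))
    exact hw (inner_self_eq_zero.1 hw')
  have hinter : ν (S ∩ S') = 0 := by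
    refine measure_mono_null (fun y hy => ?_) (Measure.addHaar_submodule ν _ hker)
    exact (LinearMap.mem_ker (f := innerₛₗ ℝ w)).2 (le_antisymm hy.2.2 hy.1.2)
  have h := measure_union_add_inter (μ := ν) S hS'
  rw [hunion, hinter, add_zero, ← hneg, Measure.measure_neg, ← two_mul] at h
  rw [h, mul_comm, ENNReal.mul_div_cancel_right two_ne_zero ENNReal.ofNat_ne_top]

theorem cond_setOf_inner_nonneg (hs : MeasurableSet s) (hsymm : -s = s) (h0 : ν s ≠ 0)
    (htop : ν s ≠ ∞) {w : E} (hw : w ≠ 0) : ν[{y | 0 ≤ ⟪w, y⟫} | s] = 2⁻¹ := by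
  rw [cond_apply hs, measure_inter_setOf_inner_nonneg ν hs hsymm hw, ← mul_div_assoc,
    ENNReal.inv_mul_cancel h0 htop, one_div]

end InnerProductSpace

theorem tendsto_measure_setOf_neg_le {α : Type*} [MeasurableSpace α] (ν : Measure α)
    [IsFiniteMeasure ν] {f : α → ℝ} (hf : Measurable f) :
    Tendsto (fun ε => ν {y | -ε ≤ f y}) (𝓝[>] 0) (𝓝 (ν {y | 0 ≤ f y})) := by
  have hinter : {y | 0 ≤ f y} = ⋂ r > (0 : ℝ), {y | -r ≤ f y} := by
    ext y
    simp only [Set.mem_ofPred_eq, Set.mem_iInter]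
    refine ⟨fun hy r hr => by linarith, fun hy => le_of_not_gt fun hneg => ?_⟩
    linarith [hy (-f y / 2) (by linarith)]
  rw [hinter]
  exact tendsto_measure_biInter_gt
    (fun _ _ => (measurableSet_le measurable_const hf).nullMeasurableSet)
    (fun _ _ _ hij _ hy => (neg_le_neg hij).trans hy) ⟨1, one_pos, measure_ne_top ν _⟩

section TukeyDepth

variable {d : ℕ}

theorem tukeyDepth_le_measureReal (p : Measure (Euc d)) (x : Euc d) {v : Euc d} (hv : v ≠ 0) :
    tukeyDepth x p ≤ p.real {y | 0 ≤ ⟪v, y - x⟫} :=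
  ciInf_le ⟨0, by rintro _ ⟨v, rfl⟩; exact ENNReal.toReal_nonneg⟩ (⟨v, hv⟩ : {v : Euc d // v ≠ 0})

theorem le_tukeyDepth [Nontrivial (Euc d)] {p : Measure (Euc d)} {x : Euc d} {c : ℝ}
    (h : ∀ v ≠ 0, c ≤ p.real {y | 0 ≤ ⟪v, y - x⟫}) : c ≤ tukeyDepth x p :=
  have : Nonempty {v : Euc d // v ≠ 0} := nonempty_subtype.2 (exists_ne 0)
  le_ciInf fun v => h v v.2

def ballPlusPoint (μ : Euc d) : Measure (Euc d) :=
  (2 / 3 : ℝ≥0∞) • volume[|closedBall (0 : Euc d) 1] + (3⁻¹ : ℝ≥0∞) • Measure.dirac μ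

theorem ballPlusPoint_real_apply (μ : Euc d) {A : Set (Euc d)} (hA : MeasurableSet A) :
    (ballPlusPoint μ).real A =
      2 / 3 * (volume[|closedBall (0 : Euc d) 1]).real A + 1 / 3 * A.indicator 1 μ := by
  by_cases hμA : μ ∈ A
  · simp only [ballPlusPoint, Measure.real, Measure.add_apply, Measure.smul_apply,
      Measure.dirac_apply' _ hA, Set.indicator_of_mem hμA, smul_eq_mul, Pi.one_apply, mul_one]
    rw [ENNReal.toReal_add (by finiteness) (by finiteness)]
    simp
  · simp [ballPlusPoint, Measure.real, Measure.dirac_apply' _ hA, hμA]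

theorem tukeyDepth_ballPlusPoint_self {μ : Euc d} (hμ : 1 < ‖μ‖) :
    tukeyDepth μ (ballPlusPoint μ) = 1 / 3 := by
  have hμ0 : μ ≠ 0 := norm_pos_iff.1 (one_pos.trans hμ)
  have : Nontrivial (Euc d) := nontrivial_of_ne μ 0 hμ0
  have hH : ∀ v : Euc d, MeasurableSet {y | 0 ≤ ⟪v, y - μ⟫} :=
    fun v => measurableSet_le measurable_const (by fun_prop)
  refine le_antisymm ?_ (le_tukeyDepth fun v _ => ?_)
  · have hdisj : closedBall 0 1 ∩ {y | 0 ≤ ⟪μ, y - μ⟫} = ∅ := by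
      refine Set.eq_empty_of_forall_notMem fun y ⟨hy, hyH⟩ => ?_
      rw [mem_closedBall_zero_iff] at hy
      rw [Set.mem_ofPred_eq, inner_sub_right, real_inner_self_eq_norm_sq, sub_nonneg] at hyH
      nlinarith [real_inner_le_norm μ y, norm_nonneg y]
    calc tukeyDepth μ (ballPlusPoint μ)
        ≤ (ballPlusPoint μ).real {y | 0 ≤ ⟪μ, y - μ⟫} := tukeyDepth_le_measureReal _ _ hμ0
      _ = 1 / 3 := by
        rw [ballPlusPoint_real_apply _ (hH μ), measureReal_def,
          ← cond_inter_self measurableSet_closedBall, hdisj]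
        simp
  · rw [ballPlusPoint_real_apply _ (hH v), Set.indicator_of_mem (by simp)]
    simp only [Pi.one_apply, mul_one, le_add_iff_nonneg_left]
    positivity

theorem tukeyDepth_ballPlusPoint_le_of_ne (hd : 2 ≤ d) {μ x : Euc d} (hx : x ≠ μ) :
    tukeyDepth x (ballPlusPoint μ) ≤ 1 / 3 := by
  set U := volume[|closedBall (0 : Euc d) 1]
  set u := x - μ
  have hu : 0 < ‖u‖ := norm_pos_iff.2 (sub_ne_zero.2 hx)
  obtain ⟨w, hw, hwu, hwx⟩ :=
    exists_ne_zero_inner_eq_zero_inner_nonneg (by rwa [finrank_euclideanSpace_fin]) u x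
  set K := ‖u‖ * (1 + ‖x‖)
  have hK : 0 < K := by positivity
  have hbound : ∀ ε > 0, tukeyDepth x (ballPlusPoint μ) ≤ 2 / 3 * U.real {y | -ε ≤ ⟪w, y⟫} := by
    intro ε hε
    set v := w + (ε / K) • u
    have hvu : 0 < ⟪v, u⟫ := by
      rw [inner_add_left, real_inner_smul_left, hwu, real_inner_self_eq_norm_sq]
      positivity
    have hv : v ≠ 0 := fun h => by rw [h, inner_zero_left] at hvu; exact lt_irrefl _ hvu
    have hH : MeasurableSet {y | 0 ≤ ⟪v, y - x⟫} := measurableSet_le measurable_const (by fun_prop)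
    have hμH : μ ∉ {y | 0 ≤ ⟪v, y - x⟫} := by
      rw [Set.mem_ofPred_eq, not_le, ← neg_sub, inner_neg_right, neg_neg_iff_pos]
      exact hvu
    have hsub := closedBall_inter_setOf_inner_sub_nonneg_subset (u := u) hwx
      (by positivity : 0 ≤ ε / K)
    rw [div_mul_cancel₀ _ hK.ne'] at hsub
    calc tukeyDepth x (ballPlusPoint μ)
        ≤ (ballPlusPoint μ).real {y | 0 ≤ ⟪v, y - x⟫} := tukeyDepth_le_measureReal _ _ hv
      _ = 2 / 3 * U.real (closedBall 0 1 ∩ {y | 0 ≤ ⟪v, y - x⟫}) := by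
        rw [ballPlusPoint_real_apply _ hH, Set.indicator_of_notMem hμH, measureReal_def,
          measureReal_def, cond_inter_self measurableSet_closedBall, mul_zero, add_zero]
      _ ≤ 2 / 3 * U.real {y | -ε ≤ ⟪w, y⟫} :=
        mul_le_mul_of_nonneg_left (measureReal_mono hsub) (by norm_num)
  have hhalf : U {y | 0 ≤ ⟪w, y⟫} = 2⁻¹ :=
    cond_setOf_inner_nonneg volume measurableSet_closedBall (by rw [neg_closedBall, neg_zero])
      (measure_closedBall_pos _ _ one_pos).ne' measure_closedBall_lt_top.ne hw
  have hlim : Tendsto (fun ε => 2 / 3 * U.real {y | -ε ≤ ⟪w, y⟫}) (𝓝[>] 0) (𝓝 (1 / 3)) := by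
    have h := ((ENNReal.tendsto_toReal (measure_ne_top U _)).comp
      (tendsto_measure_setOf_neg_le U (f := (⟪w, ·⟫)) (by fun_prop))).const_mul (2 / 3)
    rw [hhalf] at h
    convert h using 2
    · rfl
    · norm_num
  exact ge_of_tendsto hlim (eventually_nhdsWithin_of_forall hbound)

end TukeyDepth

/-- **Ball-plus-point construction for the 1/3 breakdown upper
bound.** Let `d ≥ 2`, let `U` be the uniform probability measure on the closed
unit ball of `ℝ^d`, let `‖μ‖ > 1`, and let `p = (2/3) U + (1/3) δ_μ`. Then
`D(μ, p) = 1/3` and `D(x, p) ≤ 1/3` for every `x`; i.e. `μ` is a Tukey median. -/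
theorem ball_plus_point_tukey_depth {d : ℕ} (hd : 2 ≤ d)
    (μ : Euc d) (hμ : 1 < ‖μ‖)
    (U p : Measure (Euc d))
    (hU : U = (volume (Metric.closedBall (0 : Euc d) 1))⁻¹ •
      volume.restrict (Metric.closedBall (0 : Euc d) 1))
    (hp : p = (2 / 3 : ℝ≥0∞) • U + (3⁻¹ : ℝ≥0∞) • Measure.dirac μ) :
    tukeyDepth μ p = 1 / 3 ∧ ∀ x : Euc d, tukeyDepth x p ≤ 1 / 3 := by
  obtain rfl : p = ballPlusPoint μ := by rw [hp, hU]; rfl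
  refine ⟨tukeyDepth_ballPlusPoint_self hμ, fun x => ?_⟩
  rcases eq_or_ne x μ with rfl | hx
  · exact (tukeyDepth_ballPlusPoint_self hμ).le
  · exact tukeyDepth_ballPlusPoint_le_of_ne hd hx
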